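/- Let A(z, k) = ∑_x sup_P P(x | z) be the conditional Shtarkov sum of the SBM with k communities given assignment z ∈ [k]^n (sum over all graphs x on n vertices, sup over symmetric P ∈ [0,1]^{k×k}). Then for all n ≥ 2, all k ≥ 1, and all z ∈ [k]^n: 0 ≤ log A(z, k) ≤ (k(k+1)/2) log n + c_k, where c_k depends only on k. -/

import Mathlib

/-!
Bounding the supremum block by block by the maximum-likelihood value, the sum over graphs
factorizes over the `k(k+1)/2` blocks `a ≤ b` into binomial Shtarkov sums
`∑_o C(m,o) (o/m)^o (1-o/m)^(m-o)`, where `m < n²` is the number of vertex pairs in the block.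
By Stirling's formula the `o`-th term is at most `1/√(o+1) + 1/√(m-o+1)`, so each binomial
Shtarkov sum is `O(√m) = O(n)`. The lower bound holds because for a fixed `P` the likelihoods
of all graphs sum to `1`.
-/

open Finset

/-- Number of potential edges between communities `ab.1` and `ab.2` under assignment `z`. -/
def nabSBM (n k : ℕ) (z : Fin n → Fin k) (ab : Fin k × Fin k) : ℕ :=
  (Finset.univ.filter (fun p : {p : Fin n × Fin n // p.1 < p.2} =>
    min (z p.1.1) (z p.1.2) = ab.1 ∧ max (z p.1.1) (z p.1.2) = ab.2)).card

/-- Number of edges of the graph `x` between communities `ab.1` and `ab.2`. -/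
def oabSBM (n k : ℕ) (z : Fin n → Fin k) (x : {p : Fin n × Fin n // p.1 < p.2} → Bool)
    (ab : Fin k × Fin k) : ℕ :=
  (Finset.univ.filter (fun p : {p : Fin n × Fin n // p.1 < p.2} =>
    (min (z p.1.1) (z p.1.2) = ab.1 ∧ max (z p.1.1) (z p.1.2) = ab.2) ∧ x p = true)).card

/-- Conditional Shtarkov sum `A(z,k) = ∑_x sup_P P(x|z)` of the SBM with `k` communities,
the sup being over symmetric `P ∈ [0,1]^{k×k}`. -/
noncomputable def shtarkovA (n k : ℕ) (z : Fin n → Fin k) : ℝ :=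
  ∑ x : {p : Fin n × Fin n // p.1 < p.2} → Bool,
    ⨆ P : {P : Fin k → Fin k → ℝ //
        (∀ a b, P a b ∈ Set.Icc (0 : ℝ) 1) ∧ (∀ a b, P a b = P b a)},
      ∏ ab ∈ Finset.univ.filter (fun ab : Fin k × Fin k => ab.1 ≤ ab.2),
        (P.1 ab.1 ab.2) ^ (oabSBM n k z x ab) *
          (1 - P.1 ab.1 ab.2) ^ (nabSBM n k z ab - oabSBM n k z x ab)

open Real
open scoped Nat

/-- `sup_{p ∈ [0,1]} p^a (1-p)^b`; the convention `0 ^ 0 = 1` covers `a = 0` or `b = 0`. -/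
noncomputable def bernoulliMaxLik (a b : ℕ) : ℝ :=
  (a : ℝ) ^ a * (b : ℝ) ^ b / ((a + b : ℕ) : ℝ) ^ (a + b)

lemma pow_mul_pow_le_of_add_eq {a b : ℕ} {u v : ℝ} (hu : 0 ≤ u) (hv : 0 ≤ v)
    (huv : u + v = a + b) : u ^ a * v ^ b ≤ (a : ℝ) ^ a * (b : ℝ) ^ b := by
  rcases Nat.eq_zero_or_pos a with rfl | ha
  · simpa using pow_le_pow_left₀ hv (by simp only [Nat.cast_zero] at huv; linarith) b
  rcases Nat.eq_zero_or_pos b with rfl | hb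
  · simpa using pow_le_pow_left₀ hu (by simp only [Nat.cast_zero] at huv; linarith) a
  have ha' : (0 : ℝ) < a := by exact_mod_cast ha
  have hb' : (0 : ℝ) < b := by exact_mod_cast hb
  have hs : (0 : ℝ) < a + b := by positivity
  -- weighted AM-GM with weights `a/(a+b)`, `b/(a+b)` at the points `u/a`, `v/b`
  have amgm := Real.geom_mean_le_arith_mean2_weighted (div_nonneg ha'.le hs.le)
    (div_nonneg hb'.le hs.le) (div_nonneg hu ha'.le) (div_nonneg hv hb'.le)
    (by field_simp)
  have hone : (a : ℝ) / (a + b) * (u / a) + b / (a + b) * (v / b) = 1 := by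
    field_simp; linarith
  have hpow : ((u / a) ^ ((a : ℝ) / (a + b)) * (v / b) ^ ((b : ℝ) / (a + b))) ^ (a + b) =
      (u / a) ^ a * (v / b) ^ b := by
    rw [mul_pow, ← rpow_natCast, ← rpow_natCast _ (a + b), ← rpow_mul (by positivity),
      ← rpow_mul (by positivity)]
    push_cast
    rw [div_mul_cancel₀ _ hs.ne', div_mul_cancel₀ _ hs.ne', rpow_natCast, rpow_natCast]
  have key : (u / a) ^ a * (v / b) ^ b ≤ 1 := by
    rw [← hpow]
    exact pow_le_one₀ (by positivity) (hone ▸ amgm)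
  rwa [div_pow, div_pow, ← mul_div_mul_comm, div_le_one (by positivity)] at key

lemma pow_mul_one_sub_pow_le_bernoulliMaxLik (a b : ℕ) {p : ℝ} (hp₀ : 0 ≤ p) (hp₁ : p ≤ 1) :
    p ^ a * (1 - p) ^ b ≤ bernoulliMaxLik a b := by
  rcases Nat.eq_zero_or_pos (a + b) with hab | hab
  · obtain ⟨rfl, rfl⟩ := Nat.add_eq_zero_iff.1 hab
    simp [bernoulliMaxLik]
  have hs : (0 : ℝ) < ((a + b : ℕ) : ℝ) := by exact_mod_cast hab
  rw [bernoulliMaxLik, le_div_iff₀ (by positivity)]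
  have := pow_mul_pow_le_of_add_eq (a := a) (b := b) (u := p * ((a + b : ℕ) : ℝ))
    (v := (1 - p) * ((a + b : ℕ) : ℝ)) (mul_nonneg hp₀ hs.le)
    (mul_nonneg (sub_nonneg.2 hp₁) hs.le) (by push_cast; ring)
  calc p ^ a * (1 - p) ^ b * ((a + b : ℕ) : ℝ) ^ (a + b)
      = (p * ((a + b : ℕ) : ℝ)) ^ a * ((1 - p) * ((a + b : ℕ) : ℝ)) ^ b := by
        rw [mul_pow, mul_pow]; ring
    _ ≤ _ := this

lemma factorial_eq_stirlingSeq_mul {n : ℕ} (hn : n ≠ 0) :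
    (n ! : ℝ) = Stirling.stirlingSeq n * (√(2 * n) * (n / exp 1) ^ n) := by
  rw [Stirling.stirlingSeq, div_mul_cancel₀]
  have : (0 : ℝ) < n := by exact_mod_cast Nat.pos_of_ne_zero hn
  positivity

lemma choose_mul_bernoulliMaxLik_eq {a b : ℕ} (ha : a ≠ 0) (hb : b ≠ 0) :
    ((a + b).choose a : ℝ) * bernoulliMaxLik a b =
      Stirling.stirlingSeq (a + b) / (Stirling.stirlingSeq a * Stirling.stirlingSeq b) *
        (√(a + b) / (√2 * √a * √b)) := by
  have ha' : (0 : ℝ) < a := by exact_mod_cast Nat.pos_of_ne_zero ha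
  have hb' : (0 : ℝ) < b := by exact_mod_cast Nat.pos_of_ne_zero hb
  have hsa := (Stirling.sqrt_pi_le_stirlingSeq ha).trans_lt' (by positivity)
  have hsb := (Stirling.sqrt_pi_le_stirlingSeq hb).trans_lt' (by positivity)
  rw [Nat.cast_add_choose, factorial_eq_stirlingSeq_mul ha, factorial_eq_stirlingSeq_mul hb,
    factorial_eq_stirlingSeq_mul (by omega), bernoulliMaxLik]
  push_cast
  rw [sqrt_mul zero_le_two, sqrt_mul zero_le_two, sqrt_mul zero_le_two]
  simp only [div_pow, pow_add]
  field_simp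

lemma stirlingSeq_le_exp_one_div_sqrt_two {n : ℕ} (hn : n ≠ 0) :
    Stirling.stirlingSeq n ≤ exp 1 / √2 := by
  obtain ⟨n, rfl⟩ := Nat.exists_eq_succ_of_ne_zero hn
  simpa [Stirling.stirlingSeq_one] using Stirling.stirlingSeq'_antitone (Nat.zero_le n)

lemma choose_mul_bernoulliMaxLik_le_of_ne_zero {a b : ℕ} (ha : a ≠ 0) (hb : b ≠ 0) :
    ((a + b).choose a : ℝ) * bernoulliMaxLik a b ≤ √(a + b) / (2 * √a * √b) := by
  have hπa := Stirling.sqrt_pi_le_stirlingSeq ha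
  have hπb := Stirling.sqrt_pi_le_stirlingSeq hb
  have hratio : Stirling.stirlingSeq (a + b) / (Stirling.stirlingSeq a * Stirling.stirlingSeq b)
      ≤ exp 1 / √2 / π := by
    have hπ : π = √π * √π := (mul_self_sqrt pi_pos.le).symm
    rw [hπ]
    exact div_le_div₀ (by positivity) (stirlingSeq_le_exp_one_div_sqrt_two (by omega))
      (by positivity) (mul_le_mul hπa hπb (by positivity) (hπa.trans' (by positivity)))
  have he : exp 1 < π := (exp_one_lt_d9.trans_le (by norm_num)).trans pi_gt_three
  have ha' : (0 : ℝ) < √a := sqrt_pos.2 (by exact_mod_cast Nat.pos_of_ne_zero ha)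
  have hb' : (0 : ℝ) < √b := sqrt_pos.2 (by exact_mod_cast Nat.pos_of_ne_zero hb)
  rw [choose_mul_bernoulliMaxLik_eq ha hb]
  calc _ ≤ exp 1 / √2 / π * (√(a + b) / (√2 * √a * √b)) :=
        mul_le_mul_of_nonneg_right hratio (by positivity)
    _ = exp 1 / π * (√(a + b) / (2 * √a * √b)) := by
        field_simp
        rw [sq_sqrt zero_le_two]
    _ ≤ √(a + b) / (2 * √a * √b) :=
        mul_le_of_le_one_left (by positivity) ((div_le_one pi_pos).2 he.le)

lemma bernoulliMaxLik_zero_left (b : ℕ) : bernoulliMaxLik 0 b = 1 := by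
  rcases Nat.eq_zero_or_pos b with rfl | hb
  · simp [bernoulliMaxLik]
  · simp [bernoulliMaxLik, hb.ne']

lemma bernoulliMaxLik_comm (a b : ℕ) : bernoulliMaxLik a b = bernoulliMaxLik b a := by
  simp only [bernoulliMaxLik, mul_comm, add_comm]

lemma choose_mul_bernoulliMaxLik_le (a b : ℕ) :
    ((a + b).choose a : ℝ) * bernoulliMaxLik a b ≤ 1 / √(a + 1) + 1 / √(b + 1) := by
  rcases Nat.eq_zero_or_pos a with rfl | ha
  · simp [bernoulliMaxLik_zero_left]
  rcases Nat.eq_zero_or_pos b with rfl | hb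
  · simp [bernoulliMaxLik_comm a 0, bernoulliMaxLik_zero_left]
  have inv_sqrt_le : ∀ n : ℕ, 0 < n → 1 / √n ≤ 2 / √(n + 1) := fun n hn => by
    have hn' : (1 : ℝ) ≤ n := by exact_mod_cast hn
    rw [div_le_div_iff₀ (by positivity) (by positivity), one_mul]
    calc √(n + 1) ≤ √(2 ^ 2 * n) := sqrt_le_sqrt (by linarith)
      _ = 2 * √n := by rw [sqrt_mul (by norm_num), sqrt_sq zero_le_two]
  have ha' : (0 : ℝ) < √a := sqrt_pos.2 (by exact_mod_cast ha)
  have hb' : (0 : ℝ) < √b := sqrt_pos.2 (by exact_mod_cast hb)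
  have hsqrt : √(a + b) ≤ √a + √b := by
    rw [sqrt_le_left (by positivity)]
    nlinarith [sq_sqrt (Nat.cast_nonneg (α := ℝ) a), sq_sqrt (Nat.cast_nonneg (α := ℝ) b)]
  calc _ ≤ √(a + b) / (2 * √a * √b) := choose_mul_bernoulliMaxLik_le_of_ne_zero ha.ne' hb.ne'
    _ ≤ (√a + √b) / (2 * √a * √b) := by gcongr
    _ = (1 / √a + 1 / √b) / 2 := by field_simp; ring
    _ ≤ (2 / √(a + 1) + 2 / √(b + 1)) / 2 :=
        div_le_div_of_nonneg_right (add_le_add (inv_sqrt_le a ha) (inv_sqrt_le b hb)) zero_le_two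
    _ = _ := by ring

lemma sum_range_one_div_sqrt_succ_le (N : ℕ) :
    ∑ j ∈ range N, 1 / √(j + 1) ≤ 2 * √N := by
  induction N with
  | zero => simp
  | succ N ih =>
    rw [sum_range_succ]
    push_cast
    -- `√(N+1) - √N = 1 / (√(N+1) + √N) ≥ 1 / (2√(N+1))`
    have hstep : 1 / √(N + 1) ≤ 2 * √(N + 1) - 2 * √N := by
      have h1 : (0 : ℝ) < √(N + 1) := by positivity
      have hN : √N ≤ √(N + 1) := sqrt_le_sqrt (by linarith)
      rw [div_le_iff₀ h1]
      nlinarith [sq_sqrt (Nat.cast_nonneg (α := ℝ) N), sq_sqrt (by positivity : (0 : ℝ) ≤ N + 1),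
        sq_nonneg (√(N + 1) - √N)]
    linarith

lemma sum_antidiagonal_choose_mul_bernoulliMaxLik_le (m : ℕ) :
    ∑ p ∈ antidiagonal m, (m.choose p.1 : ℝ) * bernoulliMaxLik p.1 p.2 ≤ 4 * √(m + 1) := by
  calc ∑ p ∈ antidiagonal m, (m.choose p.1 : ℝ) * bernoulliMaxLik p.1 p.2
      ≤ ∑ p ∈ antidiagonal m, (1 / √(p.1 + 1) + 1 / √(p.2 + 1)) := by
        refine sum_le_sum fun p hp => ?_
        rw [← mem_antidiagonal.1 hp]
        exact choose_mul_bernoulliMaxLik_le p.1 p.2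
    _ = 2 * ∑ j ∈ range (m + 1), 1 / √(j + 1) := by
        rw [sum_add_distrib, ← Nat.sum_antidiagonal_swap (f := fun p => 1 / √((p.2 : ℝ) + 1))]
        simp only [Prod.snd_swap]
        rw [← two_mul, Nat.sum_antidiagonal_eq_sum_range_succ_mk]
    _ ≤ 4 * √(m + 1) := by
        have := sum_range_one_div_sqrt_succ_le (m + 1)
        push_cast at this
        linarith

lemma two_mul_card_filter_fst_le_snd (k : ℕ) :
    2 * #{ab : Fin k × Fin k | ab.1 ≤ ab.2} = k * (k + 1) := by
  rw [card_filter, Fintype.sum_prod_type]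
  simp only [← card_filter]
  have hIci : ∀ a : Fin k, #{b : Fin k | a ≤ b} = k - a := fun a => by
    rw [← Fin.card_Ici]; congr 1; ext; simp
  simp only [hIci]
  rw [Fin.sum_univ_eq_sum_range (fun i => k - i), ← sum_range_reflect,
    sum_congr rfl fun j hj => show k - (k - 1 - j) = j + 1 by grind]
  have gauss := sum_range_id_mul_two (k + 1)
  rw [sum_range_succ'] at gauss
  simp only [add_zero, Nat.add_sub_cancel] at gauss
  linarith

lemma sum_prod_card_filter_eq_prod_sum_choose {ι κ R : Type*} [Fintype ι] [DecidableEq ι]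
    [DecidableEq κ] [CommSemiring R] (F : Finset κ) (c : ι → κ) (hc : ∀ i, c i ∈ F)
    (f : κ → ℕ → R) :
    ∑ x : ι → Bool, ∏ b ∈ F, f b #{i | c i = b ∧ x i = true} =
      ∏ b ∈ F, ∑ o ∈ range (#{i | c i = b} + 1), (#{i | c i = b}).choose o • f b o := by
  simp only [← sum_powerset_apply_card]
  rw [prod_sum]
  refine sum_nbij' (fun x b _ => {i | c i = b ∧ x i = true})
    (fun p i => decide (i ∈ p (c i) (hc i))) (fun x _ => ?_) (fun _ _ => mem_univ _)
    (fun x _ => ?_) (fun p hp => ?_) (fun x _ => ?_)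
  · simp only [mem_pi, mem_powerset]
    intro b _ i
    simp +contextual
  · ext i; simp
  · have hsub : ∀ b hb, p b hb ⊆ ({i | c i = b} : Finset ι) :=
      fun b hb => mem_powerset.1 (mem_pi.1 hp b hb)
    ext b hb i
    simp only [mem_filter, mem_univ, true_and, decide_eq_true_eq]
    constructor
    · rintro ⟨rfl, hi⟩; exact hi
    · intro hi
      obtain rfl : c i = b := (mem_filter.1 (hsub b hb hi)).2
      exact ⟨rfl, hi⟩
  · exact (prod_attach F fun b => f b #{i | c i = b ∧ x i = true}).symm

section SBM

variable {n k : ℕ}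

def pairBlock (z : Fin n → Fin k) (p : {p : Fin n × Fin n // p.1 < p.2}) : Fin k × Fin k :=
  (min (z p.1.1) (z p.1.2), max (z p.1.1) (z p.1.2))

lemma pairBlock_fst_le_snd (z : Fin n → Fin k) (p : {p : Fin n × Fin n // p.1 < p.2}) :
    pairBlock z p ∈ ({ab : Fin k × Fin k | ab.1 ≤ ab.2} : Finset (Fin k × Fin k)) :=
  mem_filter.2 ⟨mem_univ _, min_le_max⟩

lemma nabSBM_eq_card (z : Fin n → Fin k) (ab : Fin k × Fin k) :
    nabSBM n k z ab = #{p | pairBlock z p = ab} := by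
  simp only [nabSBM, pairBlock, Prod.ext_iff]

lemma oabSBM_eq_card (z : Fin n → Fin k) (x : {p : Fin n × Fin n // p.1 < p.2} → Bool)
    (ab : Fin k × Fin k) : oabSBM n k z x ab = #{p | pairBlock z p = ab ∧ x p = true} := by
  simp only [oabSBM, pairBlock, Prod.ext_iff]

lemma nabSBM_add_one_le_sq (z : Fin n → Fin k) (ab : Fin k × Fin k) (hn : n ≠ 0) :
    nabSBM n k z ab + 1 ≤ n ^ 2 := by
  have hlt : Fintype.card {p : Fin n × Fin n // p.1 < p.2} < Fintype.card (Fin n × Fin n) :=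
    Fintype.card_subtype_lt (x := (⟨0, by omega⟩, ⟨0, by omega⟩)) (lt_irrefl _)
  rw [Fintype.card_prod, Fintype.card_fin, ← sq] at hlt
  exact ((card_filter_le _ _).trans_eq card_univ).trans_lt hlt

lemma sum_prod_oabSBM_eq_prod_sum_antidiagonal {R : Type*} [CommSemiring R]
    (z : Fin n → Fin k) (f : Fin k × Fin k → ℕ → ℕ → R) :
    ∑ x : {p : Fin n × Fin n // p.1 < p.2} → Bool, ∏ ab ∈ {ab : Fin k × Fin k | ab.1 ≤ ab.2},
        f ab (oabSBM n k z x ab) (nabSBM n k z ab - oabSBM n k z x ab) =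
      ∏ ab ∈ {ab : Fin k × Fin k | ab.1 ≤ ab.2},
        ∑ o ∈ antidiagonal (nabSBM n k z ab), (nabSBM n k z ab).choose o.1 • f ab o.1 o.2 := by
  simp only [nabSBM_eq_card, oabSBM_eq_card, Nat.sum_antidiagonal_eq_sum_range_succ_mk]
  exact sum_prod_card_filter_eq_prod_sum_choose _ (pairBlock z) (pairBlock_fst_le_snd z)
    fun ab o => f ab o (#{p | pairBlock z p = ab} - o)

noncomputable def sbmLikelihood (z : Fin n → Fin k) (x : {p : Fin n × Fin n // p.1 < p.2} → Bool)
    (P : Fin k → Fin k → ℝ) : ℝ :=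
  ∏ ab ∈ {ab : Fin k × Fin k | ab.1 ≤ ab.2},
    P ab.1 ab.2 ^ oabSBM n k z x ab * (1 - P ab.1 ab.2) ^ (nabSBM n k z ab - oabSBM n k z x ab)

lemma sum_sbmLikelihood (z : Fin n → Fin k) (P : Fin k → Fin k → ℝ) :
    ∑ x, sbmLikelihood z x P = 1 := by
  unfold sbmLikelihood
  rw [sum_prod_oabSBM_eq_prod_sum_antidiagonal z
    fun ab a b => P ab.1 ab.2 ^ a * (1 - P ab.1 ab.2) ^ b]
  refine prod_eq_one fun ab _ => ?_
  rw [← (Commute.all (P ab.1 ab.2) (1 - P ab.1 ab.2)).add_pow', add_sub_cancel, one_pow]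

lemma sbmLikelihood_le_prod_bernoulliMaxLik (z : Fin n → Fin k)
    (x : {p : Fin n × Fin n // p.1 < p.2} → Bool) {P : Fin k → Fin k → ℝ}
    (hP : ∀ a b, P a b ∈ Set.Icc (0 : ℝ) 1) :
    sbmLikelihood z x P ≤ ∏ ab ∈ {ab : Fin k × Fin k | ab.1 ≤ ab.2},
      bernoulliMaxLik (oabSBM n k z x ab) (nabSBM n k z ab - oabSBM n k z x ab) :=
  prod_le_prod (fun _ _ => mul_nonneg (pow_nonneg (hP _ _).1 _)
      (pow_nonneg (sub_nonneg.2 (hP _ _).2) _))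
    fun _ _ => pow_mul_one_sub_pow_le_bernoulliMaxLik _ _ (hP _ _).1 (hP _ _).2

lemma sum_prod_bernoulliMaxLik_le (z : Fin n → Fin k) (hn : n ≠ 0) :
    ∑ x : {p : Fin n × Fin n // p.1 < p.2} → Bool, ∏ ab ∈ {ab : Fin k × Fin k | ab.1 ≤ ab.2},
        bernoulliMaxLik (oabSBM n k z x ab) (nabSBM n k z ab - oabSBM n k z x ab) ≤
      (4 * n) ^ #{ab : Fin k × Fin k | ab.1 ≤ ab.2} := by
  rw [sum_prod_oabSBM_eq_prod_sum_antidiagonal z fun _ => bernoulliMaxLik, ← prod_const]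
  refine prod_le_prod (fun _ _ => sum_nonneg fun _ _ => ?_) fun ab _ => ?_
  · unfold bernoulliMaxLik; positivity
  · have hsq : ((nabSBM n k z ab : ℝ) + 1) ≤ (n : ℝ) ^ 2 := by
      exact_mod_cast nabSBM_add_one_le_sq z ab hn
    simp only [nsmul_eq_mul]
    calc _ ≤ 4 * √(nabSBM n k z ab + 1) := sum_antidiagonal_choose_mul_bernoulliMaxLik_le _
      _ ≤ 4 * √((n : ℝ) ^ 2) := by gcongr
      _ = 4 * n := by rw [sqrt_sq n.cast_nonneg]

lemma sum_sbmLikelihood_le_shtarkovA (z : Fin n → Fin k) {P : Fin k → Fin k → ℝ}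
    (hP : ∀ a b, P a b ∈ Set.Icc (0 : ℝ) 1) (hP_symm : ∀ a b, P a b = P b a) :
    ∑ x, sbmLikelihood z x P ≤ shtarkovA n k z :=
  sum_le_sum fun x _ => le_ciSup (f := fun P : {P : Fin k → Fin k → ℝ //
      (∀ a b, P a b ∈ Set.Icc (0 : ℝ) 1) ∧ ∀ a b, P a b = P b a} => sbmLikelihood z x P.1)
    ⟨_, Set.forall_mem_range.2 fun P => sbmLikelihood_le_prod_bernoulliMaxLik z x P.2.1⟩
    ⟨P, hP, hP_symm⟩

lemma one_le_shtarkovA (z : Fin n → Fin k) : 1 ≤ shtarkovA n k z :=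
  (sum_sbmLikelihood z 0).symm.le.trans <|
    sum_sbmLikelihood_le_shtarkovA z (fun _ _ => ⟨le_rfl, zero_le_one⟩) fun _ _ => rfl

lemma shtarkovA_le (z : Fin n → Fin k) (hn : n ≠ 0) :
    shtarkovA n k z ≤ (4 * n) ^ #{ab : Fin k × Fin k | ab.1 ≤ ab.2} := by
  have : Nonempty {P : Fin k → Fin k → ℝ //
      (∀ a b, P a b ∈ Set.Icc (0 : ℝ) 1) ∧ ∀ a b, P a b = P b a} :=
    ⟨⟨0, fun _ _ => ⟨le_rfl, zero_le_one⟩, fun _ _ => rfl⟩⟩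
  refine le_trans (sum_le_sum fun x _ => ?_) (sum_prod_bernoulliMaxLik_le z hn)
  exact ciSup_le fun P => sbmLikelihood_le_prod_bernoulliMaxLik z x P.2.1

end SBM

theorem log_shtarkovA_bounds (k : ℕ) :
    ∃ c : ℝ, ∀ n : ℕ, 2 ≤ n → ∀ z : Fin n → Fin k,
      0 ≤ Real.log (shtarkovA n k z) ∧
      Real.log (shtarkovA n k z) ≤ ((k : ℝ) * (k + 1) / 2) * Real.log n + c := by
  refine ⟨(k * (k + 1) / 2) * log 4, fun n hn z => ⟨log_nonneg (one_le_shtarkovA z), ?_⟩⟩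
  have hblocks : (#{ab : Fin k × Fin k | ab.1 ≤ ab.2} : ℝ) = k * (k + 1) / 2 := by
    have := two_mul_card_filter_fst_le_snd k
    rify at this
    linarith
  have hn' : (0 : ℝ) < n := by positivity
  calc log (shtarkovA n k z)
      ≤ log ((4 * n) ^ #{ab : Fin k × Fin k | ab.1 ≤ ab.2}) :=
        log_le_log (one_pos.trans_le (one_le_shtarkovA z)) (shtarkovA_le z (by omega))
    _ = k * (k + 1) / 2 * (log 4 + log n) := by
        rw [log_pow, log_mul (by norm_num) hn'.ne', hblocks]
    _ = _ := by ring
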